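/- Convexity of recursive rankers: for every recursive ranker formula φ of TL⁺[X_φ,Y_φ] and every nonempty finite word w, if i < j, w,i ⊨ φ, and w,j ⊨ φ, then w,k ⊨ φ for all k with i < k < j. In other words, the set of positions satisfying φ is an interval (convex subset) of dom(w). -/

import Mathlib

/-- Letter at 1-based position `i` of word `w`. -/
def letterAt {A : Type} (w : List A) (i : ℕ) : Option A := w[i - 1]?

mutual
/-- Recursive rankers of TL⁺[X_φ,Y_φ]: φ ::= ⊤ | SP φ | EP φ | X_ψ φ | Y_ψ φ. -/
inductive RForm (A : Type) where
  | top
  | SP (φ : RForm A)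
  | EP (φ : RForm A)
  | X (ψ : GForm A) (φ : RForm A)
  | Y (ψ : GForm A) (φ : RForm A)

/-- General formulas of TL⁺[X_φ,Y_φ]: ψ ::= a | φ | ψ∨ψ | ¬ψ. -/
inductive GForm (A : Type) where
  | atom (a : A)
  | rk (φ : RForm A)
  | or (ψ₁ ψ₂ : GForm A)
  | not (ψ : GForm A)
end

mutual
/-- Satisfaction of recursive rankers at (1-based) positions of a word. -/
def SatR {A : Type} (w : List A) : ℕ → RForm A → Prop
  | _, .top => True
  | _, .SP φ => SatR w 1 φ
  | _, .EP φ => SatR w w.length φ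
  | i, .X ψ φ => ∃ j, i < j ∧ j ≤ w.length ∧ SatG w j ψ ∧ SatR w j φ ∧
      ∀ k, i < k → k < j → ¬ SatG w k ψ
  | i, .Y ψ φ => ∃ j, 1 ≤ j ∧ j < i ∧ SatG w j ψ ∧ SatR w j φ ∧
      ∀ k, j < k → k < i → ¬ SatG w k ψ

/-- Satisfaction of general formulas. -/
def SatG {A : Type} (w : List A) : ℕ → GForm A → Prop
  | i, .atom a => letterAt w i = some a
  | i, .rk φ => SatR w i φ
  | i, .or ψ₁ ψ₂ => SatG w i ψ₁ ∨ SatG w i ψ₂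
  | i, .not ψ => ¬ SatG w i ψ
end

/-!
For `X_ψ φ`, a position `k` between two satisfying positions `i < j` either still sees the
witness of `i` as its next `ψ`-position, or its next `ψ`-position lies between the witnesses
of `i` and `j`, where `φ` holds by convexity of `φ`. The case `Y_ψ φ` is the mirror image.
-/

theorem Nat.exists_first_after {P : ℕ → Prop} {k n : ℕ} (hkn : k < n) (hn : P n) :
    ∃ m, k < m ∧ m ≤ n ∧ P m ∧ ∀ l, k < l → l < m → ¬ P l := by
  classical
  have hex : ∃ m, k < m ∧ P m := ⟨n, hkn, hn⟩
  obtain ⟨hkm, hm⟩ := Nat.find_spec hex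
  exact ⟨Nat.find hex, hkm, Nat.find_min' hex ⟨hkn, hn⟩, hm,
    fun l hkl hlm hl => Nat.find_min hex hlm ⟨hkl, hl⟩⟩

theorem Nat.exists_last_before {P : ℕ → Prop} {n k : ℕ} (hnk : n < k) (hn : P n) :
    ∃ m, n ≤ m ∧ m < k ∧ P m ∧ ∀ l, m < l → l < k → ¬ P l := by
  classical
  have hn' : n ≤ k - 1 := Nat.le_sub_one_of_lt hnk
  exact ⟨Nat.findGreatest P (k - 1), Nat.le_findGreatest hn' hn,
    (Nat.findGreatest_le _).trans_lt (Nat.sub_one_lt_of_lt hnk), Nat.findGreatest_spec hn' hn,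
    fun l hml hlk => Nat.findGreatest_is_greatest hml (Nat.le_sub_one_of_lt hlk)⟩

namespace RForm

variable {A : Type} {w : List A} {ψ : GForm A} {φ : RForm A}

theorem ordConnected_X (h : {k | SatR w k φ}.OrdConnected) :
    {k | SatR w k (X ψ φ)}.OrdConnected := by
  refine ⟨fun i hi j hj k ⟨hik, hkj⟩ => ?_⟩
  obtain ⟨j₁, hij₁, hj₁w, hψ₁, hφ₁, hgap₁⟩ := hi
  obtain ⟨j₂, hjj₂, hj₂w, hψ₂, hφ₂, -⟩ := hj
  rcases lt_or_ge k j₁ with hkj₁ | hj₁k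
  · exact ⟨j₁, hkj₁, hj₁w, hψ₁, hφ₁, fun l hkl => hgap₁ l (hik.trans_lt hkl)⟩
  · obtain ⟨m, hkm, hmj₂, hψm, hgap⟩ := 
      Nat.exists_first_after (P := (SatG w · ψ)) (hkj.trans_lt hjj₂) hψ₂
    exact ⟨m, hkm, hmj₂.trans hj₂w, hψm, h.out hφ₁ hφ₂ ⟨(hj₁k.trans_lt hkm).le, hmj₂⟩, hgap⟩

theorem ordConnected_Y (h : {k | SatR w k φ}.OrdConnected) :
    {k | SatR w k (Y ψ φ)}.OrdConnected := by
  refine ⟨fun i hi j hj k ⟨hik, hkj⟩ => ?_⟩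
  obtain ⟨j₁, hj₁, hj₁i, hψ₁, hφ₁, -⟩ := hi
  obtain ⟨j₂, hj₂, hj₂j, hψ₂, hφ₂, hgap₂⟩ := hj
  rcases lt_or_ge j₂ k with hj₂k | hkj₂
  · exact ⟨j₂, hj₂, hj₂k, hψ₂, hφ₂, fun l hj₂l hlk => hgap₂ l hj₂l (hlk.trans_le hkj)⟩
  · obtain ⟨m, hj₁m, hmk, hψm, hgap⟩ := 
      Nat.exists_last_before (P := (SatG w · ψ)) (hj₁i.trans_le hik) hψ₁
    exact ⟨m, hj₁.trans hj₁m, hmk, hψm, h.out hφ₁ hφ₂ ⟨hj₁m, hmk.le.trans hkj₂⟩, hgap⟩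

theorem ordConnected_setOf_satR (w : List A) : ∀ φ : RForm A, {k | SatR w k φ}.OrdConnected
  | top => Set.ordConnected_univ
  -- `SP φ` and `EP φ` do not depend on the position: they hold everywhere or nowhere.
  | SP _ => ⟨fun _ hi _ _ _ _ => hi⟩
  | EP _ => ⟨fun _ hi _ _ _ _ => hi⟩
  | X _ φ => ordConnected_X (ordConnected_setOf_satR w φ)
  | Y _ φ => ordConnected_Y (ordConnected_setOf_satR w φ)

end RForm

/-- **convexity of recursive rankers.** For every recursive ranker
formula `φ` of TL⁺[X_φ,Y_φ] and every nonempty finite word `w`, the set of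
positions satisfying `φ` is convex: if `i < j` both satisfy `φ` then so does
every `k` with `i < k < j`. -/
theorem recursive_ranker_convex {A : Type} (φ : RForm A) (w : List A) (hw : w ≠ [])
    (i j : ℕ) (hij : i < j) (hi : SatR w i φ) (hj : SatR w j φ) :
    ∀ k, i < k → k < j → SatR w k φ :=
  fun _ hik hkj => (RForm.ordConnected_setOf_satR w φ).out hi hj ⟨hik.le, hkj.le⟩
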